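/- Cut admissibility for !_{t}MacLL: in MacLL extended with the rules !L (from Γ[A] ⇒ C derive Γ[!A] ⇒ C) and !R (from A ⇒ C derive !A ⇒ !C), if Δ ⇒ A and Γ[A] ⇒ C are cut-free derivable, then Γ[Δ] ⇒ C is cut-free derivable. -/

import Mathlib

/-- Multiplicative exponential formulas: variables, unit, !, ⊗, →, ←. -/
inductive Fm : Type where
  | var : Nat → Fm
  | one : Fm
  | bang : Fm → Fm
  | tens : Fm → Fm → Fm
  | arr : Fm → Fm → Fm      -- A → B
  | larr : Fm → Fm → Fm     -- B ← A
deriving DecidableEq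

/-- Structures: binary trees of formulas, allowing the empty structure. -/
inductive Str : Type where
  | emp : Str
  | leaf : Fm → Str
  | comma : Str → Str → Str
deriving DecidableEq

/-- One-hole structure contexts. -/
inductive Ctx : Type where
  | hole : Ctx
  | commaL : Ctx → Str → Ctx
  | commaR : Str → Ctx → Ctx

/-- Plug a structure into the hole of a context. -/
def Ctx.fill : Ctx → Str → Str
  | .hole, Δ => Δ
  | .commaL c Δ, P => .comma (c.fill P) Δ
  | .commaR Γ c, P => .comma Γ (c.fill P)

/-- !Γ : bang every leaf formula of a structure. -/
def bangStr : Str → Str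
  | .emp => .emp
  | .leaf A => .leaf (.bang A)
  | .comma a b => .comma (bangStr a) (bangStr b)

/-- `StarBang Γ Γ'` : Γ' is Γ with some subset of its leaf formulas banged (!*Γ). -/
inductive StarBang : Str → Str → Prop where
  | emp : StarBang .emp .emp
  | leaf (A : Fm) : StarBang (.leaf A) (.leaf A)
  | leafBang (A : Fm) : StarBang (.leaf A) (.leaf (.bang A))
  | comma {a a' b b' : Str} : StarBang a a' → StarBang b b' →
      StarBang (.comma a b) (.comma a' b')

/-- Proper structures: nonempty binary trees of formulas (no occurrence of the
empty structure), matching the grammar Γ ::= (Γ,Γ) | F. -/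
inductive Str.proper : Str → Prop where
  | leaf (A : Fm) : (Str.leaf A).proper
  | comma {a b : Str} : a.proper → b.proper → (Str.comma a b).proper

/-- Flags selecting the optional modal/structural rules of a system. -/
structure Flags where
  bangL : Bool := false
  bangR : Bool := false
  bangRK : Bool := false
  bangR4 : Bool := false
  bangRK4 : Bool := false
  contr : Bool := false     -- single-formula contraction C
  contrK : Bool := false    -- structural contraction CK
  weak : Bool := false      -- weakening W
  cut : Bool := false

/-- Sequent derivability in MacLL extended by the rules selected by `fl`,
with nonlogical axioms `Ax`. -/
inductive Der (fl : Flags) (Ax : Set (Str × Fm)) : Str → Fm → Prop where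
  | ax {Γ : Str} {C : Fm} : (Γ, C) ∈ Ax → Der fl Ax Γ C
  | init (A : Fm) : Der fl Ax (.leaf A) A
  | tensL (Γ : Ctx) {A B C : Fm} :
      Der fl Ax (Γ.fill (.comma (.leaf A) (.leaf B))) C →
      Der fl Ax (Γ.fill (.leaf (.tens A B))) C
  | tensR {Γ Δ : Str} {A B : Fm} :
      Der fl Ax Γ A → Der fl Ax Δ B → Der fl Ax (.comma Γ Δ) (.tens A B)
  | arrL (Γ : Ctx) {Δ : Str} {A B C : Fm} :
      Der fl Ax Δ A → Der fl Ax (Γ.fill (.leaf B)) C →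
      Der fl Ax (Γ.fill (.comma Δ (.leaf (.arr A B)))) C
  | arrR {Γ : Str} {A B : Fm} :
      Der fl Ax (.comma (.leaf A) Γ) B → Der fl Ax Γ (.arr A B)
  | larrL (Γ : Ctx) {Δ : Str} {A B C : Fm} :
      Der fl Ax Δ A → Der fl Ax (Γ.fill (.leaf B)) C →
      Der fl Ax (Γ.fill (.comma (.leaf (.larr B A)) Δ)) C
  | larrR {Γ : Str} {A B : Fm} :
      Der fl Ax (.comma Γ (.leaf A)) B → Der fl Ax Γ (.larr B A)
  | oneL (Γ : Ctx) {C : Fm} :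
      Der fl Ax (Γ.fill .emp) C → Der fl Ax (Γ.fill (.leaf .one)) C
  | oneR : Der fl Ax .emp .one
  | bangL (Γ : Ctx) {A C : Fm} : fl.bangL = true →
      Der fl Ax (Γ.fill (.leaf A)) C → Der fl Ax (Γ.fill (.leaf (.bang A))) C
  | bangR {A C : Fm} : fl.bangR = true →
      Der fl Ax (.leaf A) C → Der fl Ax (.leaf (.bang A)) (.bang C)
  | bangRK {Γ : Str} {C : Fm} : fl.bangRK = true →
      Der fl Ax Γ C → Der fl Ax (bangStr Γ) (.bang C)
  | bangR4 {A C : Fm} : fl.bangR4 = true →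
      Der fl Ax (.leaf (.bang A)) C → Der fl Ax (.leaf (.bang A)) (.bang C)
  | bangRK4 {Γ Γ' : Str} {C : Fm} : fl.bangRK4 = true →
      StarBang Γ Γ' → Der fl Ax Γ' C → Der fl Ax (bangStr Γ) (.bang C)
  | contr (Γ : Ctx) {A : Fm} {C : Fm} : fl.contr = true →
      Der fl Ax (Γ.fill (.comma (.leaf (.bang A)) (.leaf (.bang A)))) C →
      Der fl Ax (Γ.fill (.leaf (.bang A))) C
  | contrK (Γ : Ctx) {Δ : Str} {C : Fm} : fl.contrK = true → Δ.proper →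
      Der fl Ax (Γ.fill (.comma (bangStr Δ) (bangStr Δ))) C →
      Der fl Ax (Γ.fill (bangStr Δ)) C
  | weak (Γ : Ctx) {A C : Fm} : fl.weak = true →
      Der fl Ax (Γ.fill .emp) C → Der fl Ax (Γ.fill (.leaf (.bang A))) C
  | cut (Γ : Ctx) {Δ : Str} {A C : Fm} : fl.cut = true →
      Der fl Ax Δ A → Der fl Ax (Γ.fill (.leaf A)) C →
      Der fl Ax (Γ.fill Δ) C

/-- Plain MacLL (no modal or structural rules, no cut). -/
def macll : Flags := {}

/-- !_{t}MacLL : MacLL + !L + !R, cut-free. -/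
def sysT : Flags := { bangL := true, bangR := true }

/-!
Write `Replaceable X Y` when every derivable `Γ[X] ⇒ C` stays derivable with `Y` in place of `X`;
cut admissibility for `A` says that a derivable `Δ ⇒ A` makes the leaf `A` replaceable by `Δ`.

The proof is by induction on `A`. When the right premise introduces `A` on the left, the cut is
handled by `PrincipalCut Δ A`, which holds for every derivable `Δ ⇒ A`: it holds for `A ⇒ A`,
survives the left rules of the left derivation, and after a right rule reduces to cuts on the
immediate subformulas of `A`. Any other last rule of the right premise commutes with the cut,
because an occurrence of `A` and the principal structure of that rule are either disjoint or one
contains the other.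
-/

namespace Ctx

def comp : Ctx → Ctx → Ctx
  | hole, e => e
  | commaL c Γ, e => commaL (c.comp e) Γ
  | commaR Γ c, e => commaR Γ (c.comp e)

@[simp]
theorem fill_comp (c e : Ctx) (s : Str) : (c.comp e).fill s = c.fill (e.fill s) := by
  induction c <;> simp [comp, fill, *]

theorem fill_leaf_eq_leaf {Γ : Ctx} {A B : Fm} (h : Γ.fill (.leaf A) = .leaf B) :
    Γ = hole ∧ A = B := by
  cases Γ <;> simp_all [fill]

theorem fill_leaf_ne_emp (Γ : Ctx) (A : Fm) : Γ.fill (.leaf A) ≠ .emp := by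
  cases Γ <;> simp [fill]

theorem fill_leaf_eq_comma {Γ : Ctx} {A : Fm} {s t : Str} (h : Γ.fill (.leaf A) = .comma s t) :
    (∃ c, Γ = commaL c t ∧ c.fill (.leaf A) = s) ∨ ∃ c, Γ = commaR s c ∧ c.fill (.leaf A) = t := by
  cases Γ with
  | hole => simp [fill] at h
  | commaL c u =>
    obtain ⟨hc, rfl⟩ := Str.comma.inj h
    exact .inl ⟨c, rfl, hc⟩
  | commaR u c =>
    obtain ⟨rfl, hc⟩ := Str.comma.inj h
    exact .inr ⟨c, rfl, hc⟩

/-- In the second alternative the two holes are disjoint: `f y` and `g x` are the same two-hole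
context with one hole filled. -/
theorem fill_leaf_eq_fill {Γ d : Ctx} {A : Fm} {t : Str} (h : Γ.fill (.leaf A) = d.fill t) :
    (∃ e, Γ = d.comp e ∧ t = e.fill (.leaf A)) ∨
      ∃ f g : Str → Ctx, Γ = f t ∧ d = g (.leaf A) ∧ ∀ x y, (f y).fill x = (g x).fill y := by
  induction Γ generalizing d with
  | hole =>
    cases d with
    | hole => exact .inl ⟨hole, rfl, h.symm⟩
    | commaL => simp [fill] at h
    | commaR => simp [fill] at h
  | commaL c u ih =>
    cases d with
    | hole => exact .inl ⟨_, rfl, h.symm⟩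
    | commaL d' u' =>
      obtain ⟨hc, rfl⟩ := Str.comma.inj h
      rcases ih hc with ⟨e, rfl, ht⟩ | ⟨f, g, rfl, rfl, hfg⟩
      · exact .inl ⟨e, rfl, ht⟩
      · exact .inr ⟨fun y => commaL (f y) u, fun x => commaL (g x) u, rfl, rfl,
          fun x y => by simp [fill, hfg]⟩
    | commaR u' d' =>
      obtain ⟨rfl, rfl⟩ := Str.comma.inj h
      exact .inr ⟨fun y => commaL c (d'.fill y), fun x => commaR (c.fill x) d', rfl, rfl,
        fun _ _ => rfl⟩
  | commaR u c ih =>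
    cases d with
    | hole => exact .inl ⟨_, rfl, h.symm⟩
    | commaL d' u' =>
      obtain ⟨rfl, rfl⟩ := Str.comma.inj h
      exact .inr ⟨fun y => commaR (d'.fill y) c, fun x => commaL d' (c.fill x), rfl, rfl,
        fun _ _ => rfl⟩
    | commaR u' d' =>
      obtain ⟨rfl, hc⟩ := Str.comma.inj h
      rcases ih hc with ⟨e, rfl, ht⟩ | ⟨f, g, rfl, rfl, hfg⟩
      · exact .inl ⟨e, rfl, ht⟩
      · exact .inr ⟨fun y => commaR u (f y), fun x => commaR u (g x), rfl, rfl,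
          fun x y => by simp [fill, hfg]⟩

end Ctx

def Replaceable (X Y : Str) : Prop :=
  ∀ (Γ : Ctx) (C : Fm), Der sysT ∅ (Γ.fill X) C → Der sysT ∅ (Γ.fill Y) C

namespace Replaceable

theorem refl (X : Str) : Replaceable X X := fun _ _ => id

theorem trans {X Y Z : Str} (h₁ : Replaceable X Y) (h₂ : Replaceable Y Z) : Replaceable X Z :=
  fun Γ C h => h₂ Γ C (h₁ Γ C h)

theorem fill {X Y : Str} (h : Replaceable X Y) (c : Ctx) : Replaceable (c.fill X) (c.fill Y) :=
  fun Γ C hX => by simpa using h (Γ.comp c) C (by simpa using hX)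

theorem comma {X X' Y Y' : Str} (hX : Replaceable X X') (hY : Replaceable Y Y') :
    Replaceable (.comma X Y) (.comma X' Y') :=
  (hX.fill (.commaL .hole Y)).trans (hY.fill (.commaR X' .hole))

theorem tensL (A B : Fm) : Replaceable (.comma (.leaf A) (.leaf B)) (.leaf (.tens A B)) :=
  fun Γ _ => Der.tensL Γ

theorem arrL {Δ : Str} {A : Fm} (h : Der sysT ∅ Δ A) (B : Fm) :
    Replaceable (.leaf B) (.comma Δ (.leaf (.arr A B))) :=
  fun Γ _ => Der.arrL Γ h

theorem larrL {Δ : Str} {A : Fm} (h : Der sysT ∅ Δ A) (B : Fm) :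
    Replaceable (.leaf B) (.comma (.leaf (.larr B A)) Δ) :=
  fun Γ _ => Der.larrL Γ h

theorem oneL : Replaceable .emp (.leaf .one) := fun Γ _ => Der.oneL Γ

theorem bangL (A : Fm) : Replaceable (.leaf A) (.leaf (.bang A)) := fun Γ _ => Der.bangL Γ rfl

theorem der_fill_of_disjoint {X Y s Δ : Str} {C : Fm} {f g : Str → Ctx}
    (hfg : ∀ x y, (f y).fill x = (g x).fill y) (hXY : Replaceable X Y)
    (ih : ∀ Γ : Ctx, Γ.fill s = (g s).fill X → Der sysT ∅ (Γ.fill Δ) C) :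
    Der sysT ∅ ((f Y).fill Δ) C := by
  rw [hfg]
  exact hXY _ _ (by rw [← hfg]; exact ih _ (hfg _ _))

end Replaceable

/-- What a cut of `Δ ⇒ A` needs when `A` is principal in the antecedent of the last rule of the
right premise; for `!A` that rule is either `!L` or `!R`. -/
def PrincipalCut (Δ : Str) : Fm → Prop
  | .var _ => True
  | .one => Replaceable .emp Δ
  | .tens A B => Replaceable (.comma (.leaf A) (.leaf B)) Δ
  | .arr A B => ∀ Δ₀, Der sysT ∅ Δ₀ A → Replaceable (.leaf B) (.comma Δ₀ Δ)
  | .larr B A => ∀ Δ₀, Der sysT ∅ Δ₀ A → Replaceable (.leaf B) (.comma Δ Δ₀)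
  | .bang A => Replaceable (.leaf A) Δ ∧ ∀ C, Der sysT ∅ (.leaf A) C → Der sysT ∅ Δ (.bang C)

namespace PrincipalCut

theorem leaf (A : Fm) : PrincipalCut (.leaf A) A := by
  cases A with
  | var => trivial
  | one => exact .oneL
  | tens A B => exact .tensL A B
  | arr A B => exact fun _ h => .arrL h B
  | larr B A => exact fun _ h => .larrL h B
  | bang A => exact ⟨.bangL A, fun _ h => Der.bangR rfl h⟩

theorem of_replaceable {Δ Δ' : Str} {A : Fm} (hP : PrincipalCut Δ A) (h : Replaceable Δ Δ') :
    PrincipalCut Δ' A := by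
  cases A with
  | var => trivial
  | one => exact Replaceable.trans hP h
  | tens => exact Replaceable.trans hP h
  | arr => exact fun Δ₀ h₀ => (hP Δ₀ h₀).trans (h.fill (.commaR Δ₀ .hole))
  | larr => exact fun Δ₀ h₀ => (hP Δ₀ h₀).trans (h.fill (.commaL .hole Δ₀))
  | bang => exact ⟨hP.1.trans h, fun C hC => h .hole _ (hP.2 C hC)⟩

end PrincipalCut

def CutAdmissible (A : Fm) : Prop := ∀ Δ, Der sysT ∅ Δ A → Replaceable (.leaf A) Δ

theorem principalCut_of_der {Δ : Str} {A : Fm}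
    (ih : ∀ B, sizeOf B < sizeOf A → CutAdmissible B) (h : Der sysT ∅ Δ A) :
    PrincipalCut Δ A := by
  induction h with
  | ax hmem => exact absurd hmem (Set.notMem_empty _)
  | init A => exact .leaf A
  | tensL c _ hP => exact (hP ih).of_replaceable ((Replaceable.tensL _ _).fill c)
  | arrL c h₁ _ _ hP => exact (hP ih).of_replaceable ((Replaceable.arrL h₁ _).fill c)
  | larrL c h₁ _ _ hP => exact (hP ih).of_replaceable ((Replaceable.larrL h₁ _).fill c)
  | oneL c _ hP => exact (hP ih).of_replaceable (Replaceable.oneL.fill c)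
  | bangL c _ _ hP => exact (hP ih).of_replaceable ((Replaceable.bangL _).fill c)
  | tensR h₁ h₂ =>
    exact (ih _ (by simp +arith) _ h₁).comma (ih _ (by simp +arith) _ h₂)
  | arrR h =>
    exact fun _ h₀ => (ih _ (by simp +arith) _ h).trans
      ((ih _ (by simp +arith) _ h₀).comma (.refl _))
  | larrR h =>
    exact fun _ h₀ => (ih _ (by simp +arith) _ h).trans
      ((Replaceable.refl _).comma (ih _ (by simp +arith) _ h₀))
  | oneR => exact .refl _
  | bangR _ h =>
    have hB := ih _ (by simp +arith) _ h
    exact ⟨hB.trans (.bangL _), fun C hC => Der.bangR rfl (hB .hole C hC)⟩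
  | bangRK hfl | bangR4 hfl | bangRK4 hfl | contr _ hfl | contrK _ hfl | weak _ hfl | cut _ hfl =>
    nomatch hfl

theorem der_fill_of_leftRule {Γ d : Ctx} {A B : Fm} {Y Δ : Str} {C : Fm}
    (rule : Replaceable Y (.leaf B)) (principal : A = B → Replaceable Y Δ)
    (h : Der sysT ∅ (d.fill Y) C)
    (ih : ∀ Γ' : Ctx, Γ'.fill (.leaf A) = d.fill Y → Der sysT ∅ (Γ'.fill Δ) C)
    (hS : Γ.fill (.leaf A) = d.fill (.leaf B)) : Der sysT ∅ (Γ.fill Δ) C := by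
  rcases Ctx.fill_leaf_eq_fill hS with ⟨e, rfl, he⟩ | ⟨f, g, rfl, rfl, hfg⟩
  · obtain ⟨rfl, rfl⟩ := Ctx.fill_leaf_eq_leaf he.symm
    simpa [Ctx.fill] using principal rfl d C h
  · exact Replaceable.der_fill_of_disjoint hfg rule ih

theorem der_fill_of_arrL {Γ d : Ctx} {A A₁ B₁ : Fm} {Δ Δ₀ : Str} {C : Fm}
    (hP : PrincipalCut Δ A) (h₁ : Der sysT ∅ Δ₀ A₁) (h₂ : Der sysT ∅ (d.fill (.leaf B₁)) C)
    (ih₁ : ∀ Γ' : Ctx, Γ'.fill (.leaf A) = Δ₀ → Der sysT ∅ (Γ'.fill Δ) A₁)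
    (ih₂ : ∀ Γ' : Ctx, Γ'.fill (.leaf A) = d.fill (.leaf B₁) → Der sysT ∅ (Γ'.fill Δ) C)
    (hS : Γ.fill (.leaf A) = d.fill (.comma Δ₀ (.leaf (.arr A₁ B₁)))) :
    Der sysT ∅ (Γ.fill Δ) C := by
  rcases Ctx.fill_leaf_eq_fill hS with ⟨e, rfl, he⟩ | ⟨f, g, rfl, rfl, hfg⟩
  · rcases Ctx.fill_leaf_eq_comma he.symm with ⟨e', rfl, he'⟩ | ⟨e', rfl, he'⟩
    · simpa [Ctx.fill] using Der.arrL d (ih₁ e' he') h₂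
    · obtain ⟨rfl, rfl⟩ := Ctx.fill_leaf_eq_leaf he'
      simpa [Ctx.fill] using hP Δ₀ h₁ d C h₂
  · exact Replaceable.der_fill_of_disjoint hfg (.arrL h₁ _) ih₂

theorem der_fill_of_larrL {Γ d : Ctx} {A A₁ B₁ : Fm} {Δ Δ₀ : Str} {C : Fm}
    (hP : PrincipalCut Δ A) (h₁ : Der sysT ∅ Δ₀ A₁) (h₂ : Der sysT ∅ (d.fill (.leaf B₁)) C)
    (ih₁ : ∀ Γ' : Ctx, Γ'.fill (.leaf A) = Δ₀ → Der sysT ∅ (Γ'.fill Δ) A₁)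
    (ih₂ : ∀ Γ' : Ctx, Γ'.fill (.leaf A) = d.fill (.leaf B₁) → Der sysT ∅ (Γ'.fill Δ) C)
    (hS : Γ.fill (.leaf A) = d.fill (.comma (.leaf (.larr B₁ A₁)) Δ₀)) :
    Der sysT ∅ (Γ.fill Δ) C := by
  rcases Ctx.fill_leaf_eq_fill hS with ⟨e, rfl, he⟩ | ⟨f, g, rfl, rfl, hfg⟩
  · rcases Ctx.fill_leaf_eq_comma he.symm with ⟨e', rfl, he'⟩ | ⟨e', rfl, he'⟩
    · obtain ⟨rfl, rfl⟩ := Ctx.fill_leaf_eq_leaf he'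
      simpa [Ctx.fill] using hP Δ₀ h₁ d C h₂
    · simpa [Ctx.fill] using Der.larrL d (ih₁ e' he') h₂
  · exact Replaceable.der_fill_of_disjoint hfg (.larrL h₁ _) ih₂

theorem replaceable_leaf_of_principalCut {Δ : Str} {A : Fm} (hΔ : Der sysT ∅ Δ A)
    (hP : PrincipalCut Δ A) : Replaceable (.leaf A) Δ := by
  intro Γ C h
  generalize hS : Γ.fill (.leaf A) = S at h
  induction h generalizing Γ with
  | ax hmem => exact absurd hmem (Set.notMem_empty _)
  | init =>
    obtain ⟨rfl, rfl⟩ := Ctx.fill_leaf_eq_leaf hS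
    exact hΔ
  | tensL _ h ih => exact der_fill_of_leftRule (.tensL _ _) (by rintro rfl; exact hP) h ih hS
  | oneL _ h ih => exact der_fill_of_leftRule .oneL (by rintro rfl; exact hP) h ih hS
  | bangL _ _ h ih => exact der_fill_of_leftRule (.bangL _) (by rintro rfl; exact hP.1) h ih hS
  | arrL _ h₁ h₂ ih₁ ih₂ => exact der_fill_of_arrL hP h₁ h₂ ih₁ ih₂ hS
  | larrL _ h₁ h₂ ih₁ ih₂ => exact der_fill_of_larrL hP h₁ h₂ ih₁ ih₂ hS
  | tensR h₁ h₂ ih₁ ih₂ =>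
    rcases Ctx.fill_leaf_eq_comma hS with ⟨c, rfl, hc⟩ | ⟨c, rfl, hc⟩
    · exact Der.tensR (ih₁ c hc) h₂
    · exact Der.tensR h₁ (ih₂ c hc)
  | arrR _ ih =>
    subst hS
    exact Der.arrR (ih (.commaR _ Γ) rfl)
  | larrR _ ih =>
    subst hS
    exact Der.larrR (ih (.commaL Γ _) rfl)
  | oneR => exact absurd hS (Ctx.fill_leaf_ne_emp _ _)
  | bangR _ h =>
    obtain ⟨rfl, rfl⟩ := Ctx.fill_leaf_eq_leaf hS
    exact hP.2 _ h
  | bangRK hfl | bangR4 hfl | bangRK4 hfl | contr _ hfl | contrK _ hfl | weak _ hfl | cut _ hfl =>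
    nomatch hfl

theorem cutAdmissible (A : Fm) : CutAdmissible A := fun _ h =>
  replaceable_leaf_of_principalCut h (principalCut_of_der (fun B _ => cutAdmissible B) h)
termination_by sizeOf A

/-- Cut admissibility for !_{t}MacLL. -/
theorem stmt4 (Δ : Str) (A : Fm) (Γ : Ctx) (C : Fm)
    (h1 : Der sysT ∅ Δ A) (h2 : Der sysT ∅ (Γ.fill (.leaf A)) C) :
    Der sysT ∅ (Γ.fill Δ) C :=
  cutAdmissible A Δ h1 Γ C h2
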